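/- arXiv:2112.13010 — 2 statements merged into one kernel-verified Lean document; each statement's English description precedes it below -/
import Mathlib

section
/- Let ψ : ℂ³ → ℂ³ be ψ(z₁,z₂,z₃) = (−z₁, −z₂, z₃) (i.e., ψ = σ²). A point z ∈ ℂ³ satisfies ψ(z) ∼ z if and only if z is Γ-equivalent to a point (a, b, w) with w ∈ ℂ and (a,b) belonging to the 8-element set {(0,0), (0,1/2), (0,i/2), (0,(1+i)/2), (1/2,0), (i/2,0), ((1+i)/2,0), ((1+i)/2,(1+i)/2)}. Moreover, points (a,b,w) and (a′,b′,w′) with (a,b) ≠ (a′,b′) taken from this set are never Γ-equivalent, so the fixed-point locus of the induced map ψ on M = Γ\G is the disjoint union of the 8 curves {[(a,b,w)] : w ∈ ℂ}. -/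
/-- The complex Heisenberg group operation on ℂ³. -/
def heisMul (z w : ℂ × ℂ × ℂ) : ℂ × ℂ × ℂ :=
  (z.1 + w.1, z.2.1 + w.2.1, z.2.2 + z.1 * w.2.1 + w.2.2)

/-- The Gaussian integers, viewed as a subset of ℂ. -/
def GInt : Set ℂ := {z | ∃ a b : ℤ, z = (a : ℂ) + (b : ℂ) * Complex.I}

/-- The lattice Γ = (ℤ[i])³ ⊆ ℂ³. -/
def inGamma (γ : ℂ × ℂ × ℂ) : Prop := γ.1 ∈ GInt ∧ γ.2.1 ∈ GInt ∧ γ.2.2 ∈ GInt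

/-- Γ-equivalence: z ∼ z′ iff z′ = γ ⋆ z for some γ ∈ Γ. -/
def gammaEquiv (z z' : ℂ × ℂ × ℂ) : Prop := ∃ γ, inGamma γ ∧ z' = heisMul γ z

/-- The map ψ(z₁,z₂,z₃) = (−z₁, −z₂, z₃), i.e. ψ = σ². -/
def psiMap (z : ℂ × ℂ × ℂ) : ℂ × ℂ × ℂ := (-z.1, -z.2.1, z.2.2)

open Complex in
/-- The 8 values (a,b) of the first two coordinates of the fixed curves of ψ. -/
def psiFixedAB : Set (ℂ × ℂ) :=
  {(0, 0), (0, 1/2), (0, I/2), (0, (1 + I)/2),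
   (1/2, 0), (I/2, 0), ((1 + I)/2, 0), ((1 + I)/2, (1 + I)/2)}

/-!
A point `z` satisfies `ψ z ∼ z` exactly when the only possible witness `γ = (2z₁, 2z₂, 2z₁z₂)`
lies in `Γ`. So `2z₁ ≡ s + ti` and `2z₂ ≡ s' + t'i` modulo `2ℤ[i]` for parities `s, t, s', t'`,
and the remaining condition `2z₁z₂ ∈ ℤ[i]` says `(s + ti)(s' + t'i) ≡ 0` modulo `2ℤ[i]`, which
has exactly the eight solutions listed in `psiFixedAB`. Since the `Γ`-orbit of the curve through
`(a, b)` depends only on `(a, b)` modulo `ℤ[i]²`, and the points `(s + ti)/2` are pairwise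
incongruent modulo `ℤ[i]`, the eight curves are disjoint.
-/

open Complex

lemma GInt_eq_range_toComplex : GInt = Set.range GaussianInt.toComplex := by
  ext z
  constructor
  · rintro ⟨a, b, rfl⟩
    exact ⟨⟨a, b⟩, GaussianInt.toComplex_def' a b⟩
  · rintro ⟨⟨a, b⟩, rfl⟩
    exact ⟨a, b, GaussianInt.toComplex_def' a b⟩

-- The carrier is `GInt` itself, so `x ∈ GInt` and `x ∈ gaussianIntSubring` agree by `rfl`.
def gaussianIntSubring : Subring ℂ :=
  GaussianInt.toComplex.range.copy GInt GInt_eq_range_toComplex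

lemma div_two_mem_GInt_iff (a b : ℤ) :
    ((a + b * I) / 2 : ℂ) ∈ GInt ↔ (a : ZMod 2) = 0 ∧ (b : ZMod 2) = 0 := by
  simp only [ZMod.intCast_eq_zero_iff_even]
  constructor
  · rintro ⟨c, d, h⟩
    have h₂ : (a : ℂ) + b * I = (c + c : ℤ) + (d + d : ℤ) * I := by
      push_cast; linear_combination 2 * h
    simp only [Complex.ext_iff, add_re, add_im, intCast_re, intCast_im, mul_re, mul_im, I_re,
      I_im, mul_zero, mul_one, sub_zero, add_zero, zero_add, Int.cast_inj] at h₂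
    exact ⟨⟨c, h₂.1⟩, ⟨d, h₂.2⟩⟩
  · rintro ⟨⟨c, rfl⟩, ⟨d, rfl⟩⟩
    exact ⟨c, d, by push_cast; ring⟩

lemma two_mul_mem_of_sub_mem {a x : ℂ} (ha : 2 * a ∈ GInt) (hx : x - a ∈ GInt) :
    2 * x ∈ GInt := by
  have h : 2 * x = 2 * a + 2 * (x - a) := by ring
  rw [h]
  exact (add_mem ha (mul_mem (ofNat_mem _ 2) hx) : _ ∈ gaussianIntSubring)

lemma two_mul_mul_mem_iff_of_sub_mem {a b x y : ℂ} (ha : 2 * a ∈ GInt) (hb : 2 * b ∈ GInt)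
    (hx : x - a ∈ GInt) (hy : y - b ∈ GInt) : 2 * x * y ∈ GInt ↔ 2 * a * b ∈ GInt := by
  have h : 2 * x * y =
      2 * a * b + (2 * a * (y - b) + 2 * b * (x - a) + 2 * (x - a) * (y - b)) := by ring
  have hr : 2 * a * (y - b) + 2 * b * (x - a) + 2 * (x - a) * (y - b) ∈ gaussianIntSubring :=
    add_mem (add_mem (mul_mem ha hy) (mul_mem hb hx)) (mul_mem (mul_mem (ofNat_mem _ 2) hx) hy)
  rw [h]
  exact add_mem_cancel_right hr

-- The coset representatives `(s + ti)/2` of `½ℤ[i] / ℤ[i]`, indexed by the parities `(s, t)`.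
noncomputable def halfPoint (p : ZMod 2 × ZMod 2) : ℂ := ((p.1.val : ℤ) + (p.2.val : ℤ) * I) / 2

lemma two_mul_halfPoint_mem (p : ZMod 2 × ZMod 2) : 2 * halfPoint p ∈ GInt :=
  ⟨p.1.val, p.2.val, by simp only [halfPoint]; ring⟩

lemma halfPoint_sub_halfPoint_mem_iff (p q : ZMod 2 × ZMod 2) :
    halfPoint p - halfPoint q ∈ GInt ↔ p = q := by
  have h : halfPoint p - halfPoint q =
      (((p.1.val - q.1.val : ℤ) : ℂ) + ((p.2.val - q.2.val : ℤ) : ℂ) * I) / 2 := by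
    simp only [halfPoint]; push_cast; ring
  rw [h, div_two_mem_GInt_iff, Prod.ext_iff]
  push_cast
  simp only [ZMod.natCast_zmod_val, sub_eq_zero]

lemma two_mul_halfPoint_mul_halfPoint_mem_iff (p q : ZMod 2 × ZMod 2) :
    2 * halfPoint p * halfPoint q ∈ GInt ↔
      p.1 * q.1 - p.2 * q.2 = 0 ∧ p.1 * q.2 + p.2 * q.1 = 0 := by
  have h : 2 * halfPoint p * halfPoint q =
      (((p.1.val * q.1.val - p.2.val * q.2.val : ℤ) : ℂ) +
        ((p.1.val * q.2.val + p.2.val * q.1.val : ℤ) : ℂ) * I) / 2 := by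
    simp only [halfPoint]; push_cast; linear_combination (p.2.val * q.2.val / 2 : ℂ) * I_mul_I
  rw [h, div_two_mem_GInt_iff]
  push_cast
  simp only [ZMod.natCast_zmod_val]

lemma exists_sub_halfPoint_mem {x : ℂ} (hx : 2 * x ∈ GInt) :
    ∃ p : ZMod 2 × ZMod 2, x - halfPoint p ∈ GInt := by
  obtain ⟨a, b, hab⟩ := hx
  refine ⟨((a : ZMod 2), (b : ZMod 2)), ?_⟩
  have h : x - halfPoint ((a : ZMod 2), (b : ZMod 2)) =
      (((a - (a : ZMod 2).val : ℤ) : ℂ) + ((b - (b : ZMod 2).val : ℤ) : ℂ) * I) / 2 := by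
    simp only [halfPoint]; push_cast; linear_combination hab / 2
  rw [h, div_two_mem_GInt_iff]
  push_cast
  simp only [ZMod.natCast_zmod_val, sub_self, and_self]

lemma psiFixedAB_eq : psiFixedAB =
    {ab | ∃ p q, 2 * halfPoint p * halfPoint q ∈ GInt ∧ (halfPoint p, halfPoint q) = ab} := by
  ext ab
  simp only [two_mul_halfPoint_mul_halfPoint_mem_iff, Set.mem_ofPred_eq]
  constructor
  · intro h
    simp only [psiFixedAB, Set.mem_insert_iff, Set.mem_singleton_iff] at h
    rcases h with rfl | rfl | rfl | rfl | rfl | rfl | rfl | rfl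
    exacts [⟨(0, 0), (0, 0), by decide, by simp [halfPoint]⟩,
      ⟨(0, 0), (1, 0), by decide, by simp [halfPoint, ZMod.val_one]⟩,
      ⟨(0, 0), (0, 1), by decide, by simp [halfPoint, ZMod.val_one]⟩,
      ⟨(0, 0), (1, 1), by decide, by simp [halfPoint, ZMod.val_one]⟩,
      ⟨(1, 0), (0, 0), by decide, by simp [halfPoint, ZMod.val_one]⟩,
      ⟨(0, 1), (0, 0), by decide, by simp [halfPoint, ZMod.val_one]⟩,
      ⟨(1, 1), (0, 0), by decide, by simp [halfPoint, ZMod.val_one]⟩,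
      ⟨(1, 1), (1, 1), by decide, by simp [halfPoint, ZMod.val_one]⟩]
  · rintro ⟨⟨s, t⟩, ⟨s', t'⟩, h, rfl⟩
    have h01 : ∀ s : ZMod 2, s = 0 ∨ s = 1 := by decide
    rcases h01 s with rfl | rfl <;> rcases h01 t with rfl | rfl <;>
      rcases h01 s' with rfl | rfl <;> rcases h01 t' with rfl | rfl <;>
      first | exact absurd h (by decide) | simp [halfPoint, ZMod.val_one, psiFixedAB]

lemma two_mul_mem_and_two_mul_mul_mem_iff (x y : ℂ) :
    2 * x ∈ GInt ∧ 2 * y ∈ GInt ∧ 2 * x * y ∈ GInt ↔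
      ∃ ab ∈ psiFixedAB, x - ab.1 ∈ GInt ∧ y - ab.2 ∈ GInt := by
  rw [psiFixedAB_eq]
  constructor
  · rintro ⟨hx, hy, hxy⟩
    obtain ⟨p, hp⟩ := exists_sub_halfPoint_mem hx
    obtain ⟨q, hq⟩ := exists_sub_halfPoint_mem hy
    refine ⟨_, ⟨p, q, ?_, rfl⟩, hp, hq⟩
    rwa [← two_mul_mul_mem_iff_of_sub_mem (two_mul_halfPoint_mem p) (two_mul_halfPoint_mem q)
      hp hq]
  · rintro ⟨_, ⟨p, q, hpq, rfl⟩, hp, hq⟩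
    exact ⟨two_mul_mem_of_sub_mem (two_mul_halfPoint_mem p) hp,
      two_mul_mem_of_sub_mem (two_mul_halfPoint_mem q) hq,
      (two_mul_mul_mem_iff_of_sub_mem (two_mul_halfPoint_mem p) (two_mul_halfPoint_mem q)
        hp hq).2 hpq⟩

lemma eq_of_mem_psiFixedAB_of_sub_mem {ab ab' : ℂ × ℂ} (h : ab ∈ psiFixedAB)
    (h' : ab' ∈ psiFixedAB) (h₁ : ab'.1 - ab.1 ∈ GInt) (h₂ : ab'.2 - ab.2 ∈ GInt) :
    ab = ab' := by
  rw [psiFixedAB_eq] at h h'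
  obtain ⟨p, q, -, rfl⟩ := h
  obtain ⟨p', q', -, rfl⟩ := h'
  rw [halfPoint_sub_halfPoint_mem_iff] at h₁ h₂
  rw [h₁, h₂]

lemma exists_gammaEquiv_iff (a b : ℂ) (z : ℂ × ℂ × ℂ) :
    (∃ w, gammaEquiv (a, b, w) z) ↔ z.1 - a ∈ GInt ∧ z.2.1 - b ∈ GInt := by
  constructor
  · rintro ⟨w, γ, ⟨h₁, h₂, -⟩, rfl⟩
    simpa [heisMul] using ⟨h₁, h₂⟩
  · rintro ⟨h₁, h₂⟩
    refine ⟨z.2.2 - (z.1 - a) * b, (z.1 - a, z.2.1 - b, 0),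
      ⟨h₁, h₂, zero_mem gaussianIntSubring⟩, ?_⟩
    ext <;> simp only [heisMul] <;> ring

lemma gammaEquiv_psiMap_self_iff (z : ℂ × ℂ × ℂ) :
    gammaEquiv (psiMap z) z ↔ 2 * z.1 ∈ GInt ∧ 2 * z.2.1 ∈ GInt ∧ 2 * z.1 * z.2.1 ∈ GInt := by
  constructor
  · rintro ⟨γ, ⟨h₁, h₂, h₃⟩, hz⟩
    simp only [heisMul, psiMap, Prod.ext_iff] at hz
    obtain ⟨e₁, e₂, e₃⟩ := hz
    have k₁ : γ.1 = 2 * z.1 := by linear_combination -e₁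
    have k₂ : γ.2.1 = 2 * z.2.1 := by linear_combination -e₂
    have k₃ : γ.2.2 = 2 * z.1 * z.2.1 := by linear_combination -e₃ + z.2.1 * k₁
    exact ⟨k₁ ▸ h₁, k₂ ▸ h₂, k₃ ▸ h₃⟩
  · rintro ⟨h₁, h₂, h₃⟩
    refine ⟨(2 * z.1, 2 * z.2.1, 2 * z.1 * z.2.1), ⟨h₁, h₂, h₃⟩, ?_⟩
    ext <;> simp only [heisMul, psiMap] <;> ring

theorem psi_fixed_locus_eight_curves :
    (∀ z : ℂ × ℂ × ℂ, gammaEquiv (psiMap z) z ↔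
      ∃ ab ∈ psiFixedAB, ∃ w : ℂ, gammaEquiv (ab.1, ab.2, w) z) ∧
    (∀ ab ∈ psiFixedAB, ∀ ab' ∈ psiFixedAB, ab ≠ ab' →
      ∀ w w' : ℂ, ¬ gammaEquiv (ab.1, ab.2, w) (ab'.1, ab'.2, w')) := by
  refine ⟨fun z => ?_, fun ab hab ab' hab' hne w w' h => ?_⟩
  · simp only [gammaEquiv_psiMap_self_iff, exists_gammaEquiv_iff,
      two_mul_mem_and_two_mul_mul_mem_iff]
  · obtain ⟨h₁, h₂⟩ := (exists_gammaEquiv_iff ab.1 ab.2 (ab'.1, ab'.2, w')).1 ⟨w, h⟩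
    exact hne (eq_of_mem_psiFixedAB_of_sub_mem hab hab' h₁ h₂)
end

section
/- The quotient topological space of ℂ³ (with its standard topology) by the Γ-equivalence relation z ∼ γ ⋆ z (γ ∈ Γ), endowed with the quotient topology, is compact. -/
/-- The Iwasawa manifold M = Γ\G as a quotient topological space
(ℂ³ carries its standard topology, the quotient the quotient topology). -/
def IwasawaQuot : Type := Quot gammaEquiv

noncomputable instance : TopologicalSpace IwasawaQuot :=
  instTopologicalSpaceQuot (r := gammaEquiv)

/-!
The unit cube `Q × Q × Q`, with `Q` the unit square of ℂ, is compact and meets every Γ-orbit: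
translating by Gaussian integers moves the first two coordinates of `z` into `Q`, and the left
action of `(g₁, g₂, g₃)` adds `g₃ + g₁ z₂` to the third, so a suitable `g₃` moves it into `Q`
as well. The quotient is therefore the continuous image of a compact set.
-/

open Set Complex

theorem Quot.compactSpace_of_isCompact {X : Type*} [TopologicalSpace X] {r : X → X → Prop}
    {K : Set X} (hK : IsCompact K) (hK_meets : ∀ x, ∃ y ∈ K, Quot.mk r y = Quot.mk r x) :
    CompactSpace (Quot r) := by
  have himage : Quot.mk r '' K = univ := eq_univ_of_forall (Quot.ind hK_meets)
  exact isCompact_univ_iff.mp (himage ▸ hK.image continuous_quot_mk)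

theorem exists_gInt_add_mem_unitSquare (w : ℂ) : ∃ g ∈ GInt, g + w ∈ Icc 0 1 ×ℂ Icc 0 1 := by
  refine ⟨(-⌊w.re⌋ : ℤ) + (-⌊w.im⌋ : ℤ) * I, ⟨_, _, rfl⟩, ?_⟩
  have hre : ((-⌊w.re⌋ : ℤ) + (-⌊w.im⌋ : ℤ) * I + w).re = Int.fract w.re := by
    simp only [add_re, mul_re, intCast_re, intCast_im, I_re, I_im, Int.fract]
    push_cast; ring
  have him : ((-⌊w.re⌋ : ℤ) + (-⌊w.im⌋ : ℤ) * I + w).im = Int.fract w.im := by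
    simp only [add_im, mul_im, intCast_re, intCast_im, I_re, I_im, Int.fract]
    push_cast; ring
  rw [mem_reProdIm, hre, him]
  exact ⟨⟨Int.fract_nonneg _, (Int.fract_lt_one _).le⟩,
    ⟨Int.fract_nonneg _, (Int.fract_lt_one _).le⟩⟩

theorem exists_gammaEquiv_mem_unitCube (z : ℂ × ℂ × ℂ) :
    ∃ y ∈ (Icc 0 1 ×ℂ Icc 0 1) ×ˢ (Icc 0 1 ×ℂ Icc 0 1) ×ˢ (Icc 0 1 ×ℂ Icc 0 1),
      gammaEquiv z y := by
  obtain ⟨g₁, hg₁, h₁⟩ := exists_gInt_add_mem_unitSquare z.1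
  obtain ⟨g₂, hg₂, h₂⟩ := exists_gInt_add_mem_unitSquare z.2.1
  obtain ⟨g₃, hg₃, h₃⟩ := exists_gInt_add_mem_unitSquare (g₁ * z.2.1 + z.2.2)
  refine ⟨heisMul (g₁, g₂, g₃) z, ⟨h₁, h₂, ?_⟩, (g₁, g₂, g₃), ⟨hg₁, hg₂, hg₃⟩, rfl⟩
  simpa only [heisMul, add_assoc] using h₃

theorem iwasawa_compact : CompactSpace IwasawaQuot := by
  have hQ : IsCompact (Icc (0 : ℝ) 1 ×ℂ Icc 0 1) := isCompact_Icc.reProdIm isCompact_Icc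
  refine Quot.compactSpace_of_isCompact (hQ.prod (hQ.prod hQ)) fun z => ?_
  obtain ⟨y, hy, hzy⟩ := exists_gammaEquiv_mem_unitCube z
  exact ⟨y, hy, (Quot.sound hzy).symm⟩
end
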